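/- arXiv:2206.00199 — 3 statements merged into one kernel-verified Lean document; each statement's English description precedes it below -/
import Mathlib

section
/- Let Y be a mean-zero random variable with variance σ²>0 and let Y* be defined on the same space with Y*-Y ≤ c almost surely for some c>0. Suppose the moment generating function m(s)=E[e^{sY}] exists for all s ∈ [0,1/c), and suppose there are finite constants B₁, B₂ ≥ 0 such that for all s ∈ (0,1/c), m'(s) ≤ ((σ²+B₂)s/(1-sc))·m(s) + B₁·m(s). Then for all t > 0, P(Y ≥ t) ≤ exp(-t(t-2B₁)/(2(σ²+B₂+ct))). -/
/-!
With `D = σ² + B₂ + c t` and `s = t / D` one has `D (1 - s c) = σ² + B₂`, so on `(0, s)` the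
hypothesis implies the linear differential inequality `m' ≤ (D u + B₁) m` (as `m ≥ 0`).
Gronwall's inequality gives `m s ≤ exp (D s² / 2 + B₁ s)`, since `m 0 = 1` and `m` is
continuous at `0` by dominated convergence; Chernoff's bound at `s` is then the claim.
-/

open MeasureTheory ProbabilityTheory Real Set

lemma exp_mul_le_exp_mul_add_exp_mul {a b t : ℝ} (hat : a ≤ t) (htb : t ≤ b) (x : ℝ) :
    exp (t * x) ≤ exp (a * x) + exp (b * x) := by
  rcases le_total 0 x with hx | hx
  · have : exp (t * x) ≤ exp (b * x) := exp_le_exp.mpr (by nlinarith)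
    linarith [exp_pos (a * x)]
  · have : exp (t * x) ≤ exp (a * x) := exp_le_exp.mpr (by nlinarith)
    linarith [exp_pos (b * x)]

namespace ProbabilityTheory

lemma continuousOn_mgf_Icc {Ω : Type*} [MeasurableSpace Ω] {μ : Measure Ω} {X : Ω → ℝ}
    {a b : ℝ} (ha : Integrable (fun ω ↦ exp (a * X ω)) μ)
    (hb : Integrable (fun ω ↦ exp (b * X ω)) μ) :
    ContinuousOn (mgf X μ) (Icc a b) := by
  refine continuousOn_of_dominated (bound := fun ω ↦ exp (a * X ω) + exp (b * X ω))
    (fun t ht ↦ (integrable_exp_mul_of_le_of_le ha hb ht.1 ht.2).1) (fun t ht ↦ ?_)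
    (ha.add hb) (ae_of_all _ fun ω ↦ by fun_prop)
  refine ae_of_all _ fun ω ↦ ?_
  rw [norm_of_nonneg (exp_nonneg _)]
  exact exp_mul_le_exp_mul_add_exp_mul ht.1 ht.2 (X ω)

end ProbabilityTheory

/-- Gronwall's inequality; the integrating factor `exp (-Φ)` makes `f · exp (-Φ)` antitone. -/
lemma le_mul_exp_sub_of_hasDerivAt_le_mul {f f' Φ Φ' : ℝ → ℝ} {a b : ℝ} (hab : a ≤ b)
    (hf : ContinuousOn f (Icc a b)) (hΦ : ContinuousOn Φ (Icc a b))
    (hf' : ∀ u ∈ Ioo a b, HasDerivAt f (f' u) u) (hΦ' : ∀ u ∈ Ioo a b, HasDerivAt Φ (Φ' u) u)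
    (hle : ∀ u ∈ Ioo a b, f' u ≤ Φ' u * f u) :
    f b ≤ f a * exp (Φ b - Φ a) := by
  have hderiv : ∀ u ∈ Ioo a b, HasDerivAt (fun v ↦ f v * exp (-Φ v))
      ((f' u - Φ' u * f u) * exp (-Φ u)) u := fun u hu ↦
    ((hf' u hu).mul (hΦ' u hu).neg.exp).congr_deriv (by simp only [Pi.neg_apply]; ring)
  have hanti : AntitoneOn (fun v ↦ f v * exp (-Φ v)) (Icc a b) := by
    refine antitoneOn_of_deriv_nonpos (convex_Icc a b)
      (hf.mul (continuous_exp.comp_continuousOn hΦ.neg)) (fun u hu ↦ ?_) (fun u hu ↦ ?_)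
    · rw [interior_Icc] at hu
      exact (hderiv u hu).differentiableAt.differentiableWithinAt
    · rw [interior_Icc] at hu
      rw [(hderiv u hu).deriv]
      exact mul_nonpos_of_nonpos_of_nonneg (by linarith [hle u hu]) (exp_nonneg _)
  have hba := hanti ⟨le_rfl, hab⟩ ⟨hab, le_rfl⟩ hab
  rw [sub_eq_add_neg, exp_add]
  calc f b = f b * exp (-Φ b) * exp (Φ b) := by rw [mul_assoc, ← exp_add]; simp
    _ ≤ f a * exp (-Φ a) * exp (Φ b) := by gcongr
    _ = f a * (exp (Φ b) * exp (-Φ a)) := by ring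

lemma le_mul_exp_of_hasDerivAt_le_affine_mul {f f' : ℝ → ℝ} {s K B : ℝ} (hs : 0 ≤ s)
    (hf : ContinuousOn f (Icc 0 s)) (hf' : ∀ u ∈ Ioo 0 s, HasDerivAt f (f' u) u)
    (hle : ∀ u ∈ Ioo 0 s, f' u ≤ (K * u + B) * f u) :
    f s ≤ f 0 * exp (K * s ^ 2 / 2 + B * s) := by
  have hΦ' (u : ℝ) : HasDerivAt (fun v ↦ K * v ^ 2 / 2 + B * v) (K * u + B) u :=
    ((((hasDerivAt_pow 2 u).const_mul K).div_const 2).add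
      ((hasDerivAt_id u).const_mul B)).congr_deriv (by ring)
  simpa using le_mul_exp_sub_of_hasDerivAt_le_mul hs hf (by fun_prop) hf' (fun u _ ↦ hΦ' u) hle

lemma mul_div_one_sub_mul_le_div_one_sub_mul_mul {a c u s : ℝ} (ha : 0 ≤ a) (hc : 0 ≤ c)
    (hu : 0 ≤ u) (hus : u ≤ s) (hsc : s * c < 1) :
    a * u / (1 - u * c) ≤ a / (1 - s * c) * u := by
  have hsc' : 0 < 1 - s * c := by linarith
  rw [div_mul_eq_mul_div, div_le_div_iff₀ (by nlinarith) hsc']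
  nlinarith [mul_nonneg (mul_nonneg ha hu) (mul_nonneg hc (sub_nonneg.2 hus))]

theorem concentration_from_mgf_ode_general
    {Ω : Type*} [MeasurableSpace Ω] (μ : Measure Ω) [IsProbabilityMeasure μ]
    (Y : Ω → ℝ) (σ2 c B1 B2 : ℝ) (m m' : ℝ → ℝ)
    (hσ : 0 < σ2)
    (hc : 0 < c) (hB2 : 0 ≤ B2)
    (hm : ∀ s, m s = ∫ ω, Real.exp (s * Y ω) ∂μ)
    (hmgf : ∀ s ∈ Set.Ico 0 (1 / c), Integrable (fun ω => Real.exp (s * Y ω)) μ)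
    (hderiv : ∀ s ∈ Set.Ioo 0 (1 / c), HasDerivAt m (m' s) s)
    (hineq : ∀ s ∈ Set.Ioo 0 (1 / c),
      m' s ≤ (σ2 + B2) * s / (1 - s * c) * m s + B1 * m s) :
    ∀ t > 0, (μ {ω | t ≤ Y ω}).toReal
      ≤ Real.exp (-(t * (t - 2 * B1)) / (2 * (σ2 + B2 + c * t))) := by
  intro t ht
  set D := σ2 + B2 + c * t
  have hD : 0 < D := by positivity
  set s := t / D
  have hs : 0 < s := by positivity
  have hsc : s * c < 1 := by
    rw [div_mul_eq_mul_div, div_lt_one hD]; linarith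
  have hs_lt : s < 1 / c := by rwa [lt_div_iff₀ hc]
  have hD_eq : (σ2 + B2) / (1 - s * c) = D := by
    rw [div_eq_iff (by linarith), mul_sub, mul_one, ← mul_assoc, mul_div_cancel₀ t hD.ne']
    ring
  have hm_mgf : m = mgf Y μ := funext hm
  have hint : Integrable (fun ω ↦ exp (s * Y ω)) μ := hmgf s ⟨hs.le, hs_lt⟩
  have hode : ∀ u ∈ Ioo 0 s, m' u ≤ (D * u + B1) * m u := fun u hu ↦ by
    have hmu : 0 ≤ m u := hm u ▸ integral_nonneg fun ω ↦ (exp_pos _).le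
    calc m' u ≤ (σ2 + B2) * u / (1 - u * c) * m u + B1 * m u :=
          hineq u ⟨hu.1, hu.2.trans hs_lt⟩
      _ ≤ D * u * m u + B1 * m u := by
          gcongr
          exact hD_eq ▸ mul_div_one_sub_mul_le_div_one_sub_mul_mul (by positivity) hc.le
            hu.1.le hu.2.le hsc
      _ = (D * u + B1) * m u := by ring
  have hms : m s ≤ exp (D * s ^ 2 / 2 + B1 * s) := by
    simpa [hm_mgf] using le_mul_exp_of_hasDerivAt_le_affine_mul hs.le
      (hm_mgf ▸ continuousOn_mgf_Icc (by simp) hint)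
      (fun u hu ↦ hderiv u ⟨hu.1, hu.2.trans hs_lt⟩) hode
  calc (μ {ω | t ≤ Y ω}).toReal ≤ exp (-s * t) * m s :=
        hm_mgf ▸ measure_ge_le_exp_mul_mgf t hs.le hint
    _ ≤ exp (-s * t) * exp (D * s ^ 2 / 2 + B1 * s) := by gcongr
    _ = exp (-(t * (t - 2 * B1)) / (2 * (σ2 + B2 + c * t))) := by
        rw [← exp_add]
        congr 1
        simp only [s]
        field_simp
        ring

/-- concentration from the mgf differential inequality. -/
theorem concentration_from_mgf_ode
    {Ω : Type*} [MeasurableSpace Ω] (μ : Measure Ω) [IsProbabilityMeasure μ]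
    (Y Ystar : Ω → ℝ) (σ2 c B1 B2 : ℝ) (m m' : ℝ → ℝ)
    (hY : Measurable Y) (hYstar : Measurable Ystar)
    (hmean : ∫ ω, Y ω ∂μ = 0) (hvar : variance Y μ = σ2) (hσ : 0 < σ2)
    (hc : 0 < c) (hB1 : 0 ≤ B1) (hB2 : 0 ≤ B2)
    (hcoupling : ∀ᵐ ω ∂μ, Ystar ω - Y ω ≤ c)
    (hm : ∀ s, m s = ∫ ω, Real.exp (s * Y ω) ∂μ)
    (hmgf : ∀ s ∈ Set.Ico 0 (1 / c), Integrable (fun ω => Real.exp (s * Y ω)) μ)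
    (hderiv : ∀ s ∈ Set.Ioo 0 (1 / c), HasDerivAt m (m' s) s)
    (hineq : ∀ s ∈ Set.Ioo 0 (1 / c),
      m' s ≤ (σ2 + B2) * s / (1 - s * c) * m s + B1 * m s) :
    ∀ t > 0, (μ {ω | t ≤ Y ω}).toReal
      ≤ Real.exp (-(t * (t - 2 * B1)) / (2 * (σ2 + B2 + c * t))) :=
  concentration_from_mgf_ode_general μ Y σ2 c B1 B2 m m' hσ hc hB2 hm hmgf hderiv hineq
end

section
/- Suppose a random variable Y satisfies E[e^{αY}] ≤ exp((K/c²)(e^{cα}(cα-1)+1) + B₁α) for α = (log(t-B₁) - log log(t-B₁))/c, where K = σ²+B₂ > 0, c>0, B₁ ≥ 0, and t > e + B₁. Then P(Y ≥ t) ≤ exp(-((t-B₁)/c)·(log(t-B₁) - log log(t-B₁) - K/c)) ≤ exp(-((t-B₁)/(2c))·(log(t-B₁) - 2K/c)). -/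
open MeasureTheory

/-- the `exp(-t log t)`-type tail bound. -/
theorem tail_bound_log
    {Ω : Type*} [MeasurableSpace Ω] (μ : Measure Ω) [IsProbabilityMeasure μ]
    (Y : Ω → ℝ) (σ2 c B1 B2 K t α : ℝ)
    (hY : Measurable Y) (hσ : 0 < σ2) (hc : 0 < c) (hB1 : 0 ≤ B1) (hB2 : 0 ≤ B2)
    (hK : K = σ2 + B2)
    (ht : Real.exp 1 + B1 < t)
    (hα : α = (Real.log (t - B1) - Real.log (Real.log (t - B1))) / c)
    (hint : Integrable (fun ω => Real.exp (α * Y ω)) μ)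
    (hmgf : ∫ ω, Real.exp (α * Y ω) ∂μ
      ≤ Real.exp (K / c ^ 2 * (Real.exp (c * α) * (c * α - 1) + 1) + B1 * α)) :
    (μ {ω | t ≤ Y ω}).toReal
      ≤ Real.exp (-((t - B1) / c) *
          (Real.log (t - B1) - Real.log (Real.log (t - B1)) - K / c))
    ∧ Real.exp (-((t - B1) / c) *
          (Real.log (t - B1) - Real.log (Real.log (t - B1)) - K / c))
      ≤ Real.exp (-((t - B1) / (2 * c)) * (Real.log (t - B1) - 2 * K / c)) := by
  have hKpos : 0 < K := by rw [hK]; linarith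
  set s := t - B1 with hs
  have hes : Real.exp 1 < s := by simp only [hs]; linarith
  have hspos : (0:ℝ) < s := lt_trans (Real.exp_pos 1) hes
  have hL1 : 1 < Real.log s := (Real.lt_log_iff_exp_lt hspos).2 (by simpa using hes)
  set L := Real.log s with hLdef
  have hLpos : 0 < L := by linarith
  have hl0 : 0 ≤ Real.log L := Real.log_nonneg hL1.le
  set l := Real.log L with hldef
  have hlL : l < L := lt_of_le_of_lt (Real.log_le_sub_one_of_pos hLpos) (by linarith)
  have hα0 : 0 ≤ α := by
    rw [hα]
    exact div_nonneg (by linarith) hc.le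
  have hcα : c * α = L - l := by rw [hα]; field_simp
  have hecα : Real.exp (c * α) = s / L := by
    rw [hcα, Real.exp_sub, hldef, Real.exp_log hspos, Real.exp_log hLpos]
  have hLs : L ≤ s - 1 := Real.log_le_sub_one_of_pos hspos
  -- key inequality
  have key : s / L * (L - l - 1) + 1 ≤ s := by
    have hid : s / L * (L - l - 1) + 1 = (s * (L - l - 1) + L) / L := by
      field_simp
    rw [hid, div_le_iff₀ hLpos]
    nlinarith [mul_nonneg hspos.le hl0]
  -- exponent inequality for the first bound
  have expo : -α * t + (K / c ^ 2 * (Real.exp (c * α) * (c * α - 1) + 1) + B1 * α)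
      ≤ -(s / c) * (L - l - K / c) := by
    rw [hecα, hcα]
    have main : K / c ^ 2 * (s / L * (L - l - 1) + 1) ≤ K / c ^ 2 * s :=
      mul_le_mul_of_nonneg_left key (by positivity)
    have hid2 : -(s / c) * (L - l - K / c) - (-α * t + B1 * α) = K / c ^ 2 * s := by
      rw [hα]
      simp only [hs]
      field_simp
      ring
    linarith
  -- Chernoff
  have cher := ProbabilityTheory.measure_ge_le_exp_mul_mgf (X := Y) (μ := μ) t hα0 hint
  have hmgf' : ProbabilityTheory.mgf Y μ α
      ≤ Real.exp (K / c ^ 2 * (Real.exp (c * α) * (c * α - 1) + 1) + B1 * α) := hmgf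
  have first : (μ {ω | t ≤ Y ω}).toReal
      ≤ Real.exp (-(s / c) * (L - l - K / c)) := by
    calc (μ {ω | t ≤ Y ω}).toReal
        ≤ Real.exp (-α * t) * ProbabilityTheory.mgf Y μ α := cher
      _ ≤ Real.exp (-α * t) *
          Real.exp (K / c ^ 2 * (Real.exp (c * α) * (c * α - 1) + 1) + B1 * α) := by
          exact mul_le_mul_of_nonneg_left hmgf' (Real.exp_pos _).le
      _ = Real.exp (-α * t + (K / c ^ 2 * (Real.exp (c * α) * (c * α - 1) + 1) + B1 * α)) := by
          rw [← Real.exp_add]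
      _ ≤ Real.exp (-(s / c) * (L - l - K / c)) := Real.exp_le_exp.2 expo
  refine ⟨first, ?_⟩
  -- second inequality: l ≤ L / 2
  have hsqrt : Real.sqrt L ^ 2 = L := Real.sq_sqrt hLpos.le
  have hsqrtpos : 0 < Real.sqrt L := Real.sqrt_pos.2 hLpos
  have hlogsqrt : Real.log (Real.sqrt L) = L.log / 2 := Real.log_sqrt hLpos.le
  have hls : Real.log (Real.sqrt L) ≤ Real.sqrt L - 1 :=
    Real.log_le_sub_one_of_pos hsqrtpos
  have h2l : 2 * l ≤ L := by
    rw [hldef]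
    nlinarith [sq_nonneg (Real.sqrt L - 2)]
  apply Real.exp_le_exp.2
  have e2 : -(s / (2 * c)) * (L - 2 * K / c) - (-(s / c) * (L - l - K / c))
      = (s / c) * (L / 2 - l) := by field_simp; ring
  have e3 : 0 ≤ (s / c) * (L / 2 - l) :=
    mul_nonneg (div_nonneg hspos.le hc.le) (by linarith)
  linarith
end

section
/- If random variables Y and Y* on the same probability space satisfy |Y* - Y| ≤ c almost surely, and 0 ≤ s < 2/c, then E[e^{sY*}] ≤ ((1+cs/2)/(1-cs/2))·E[e^{sY}], provided E[e^{sY}] < ∞. -/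
open MeasureTheory Real

/-!
Factoring out `e^m`, with `m` the midpoint of `sY` and `sY*` and `2u = s(Y* - Y) ≤ cs`, the
pointwise bound `(1 - cs/2) e^{sY*} ≤ (1 + cs/2) e^{sY}` reduces to `sinh u ≤ u cosh u` for
`u ≥ 0`, which holds because `u cosh u - sinh u` has derivative `u sinh u ≥ 0`. Integrating the
pointwise bound gives the claim.
-/

theorem Real.sinh_le_mul_cosh {x : ℝ} (hx : 0 ≤ x) : sinh x ≤ x * cosh x := by
  have hmono : Monotone fun u : ℝ => u * cosh u - sinh u := by
    refine monotone_of_hasDerivAt_nonneg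
      (fun u => ((hasDerivAt_id u).mul (hasDerivAt_cosh u)).sub (hasDerivAt_sinh u)) fun u => ?_
    have hsign : 0 ≤ u * sinh u := by
      rcases le_total 0 u with hu | hu
      · exact mul_nonneg hu (sinh_nonneg_iff.mpr hu)
      · exact mul_nonneg_of_nonpos_of_nonpos hu (sinh_nonpos_iff.mpr hu)
    simpa using hsign
  simpa using hmono hx

theorem Real.one_sub_mul_exp_le_one_add_mul_exp_neg {u : ℝ} (hu : 0 ≤ u) :
    (1 - u) * exp u ≤ (1 + u) * exp (-u) := by
  rw [← cosh_add_sinh, ← cosh_sub_sinh]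
  linarith [sinh_le_mul_cosh hu]

theorem Real.one_sub_half_mul_exp_le {a b δ : ℝ} (hδ : 0 ≤ δ) (hab : b - a ≤ δ) :
    (1 - δ / 2) * exp b ≤ (1 + δ / 2) * exp a := by
  rcases le_total b a with hba | hab'
  · nlinarith [exp_le_exp.mpr hba, exp_pos b]
  set u := (b - a) / 2 with hu
  set m := (a + b) / 2 with hm
  have hb : exp b = exp u * exp m := by rw [← exp_add, hu, hm]; ring_nf
  have ha : exp a = exp (-u) * exp m := by rw [← exp_add, hu, hm]; ring_nf
  calc (1 - δ / 2) * exp b ≤ (1 - u) * exp u * exp m := by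
        rw [hb, ← mul_assoc]; gcongr; linarith
    _ ≤ (1 + u) * exp (-u) * exp m :=
        mul_le_mul_of_nonneg_right (one_sub_mul_exp_le_one_add_mul_exp_neg (by linarith))
          (exp_pos m).le
    _ ≤ (1 + δ / 2) * exp a := by
        rw [ha, ← mul_assoc]; gcongr; linarith

theorem Real.exp_le_div_mul_exp {a b δ : ℝ} (hδ : 0 ≤ δ) (hδ2 : δ < 2) (hab : b - a ≤ δ) :
    exp b ≤ (1 + δ / 2) / (1 - δ / 2) * exp a := by
  rw [div_mul_eq_mul_div, le_div_iff₀ (by linarith), mul_comm]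
  exact one_sub_half_mul_exp_le hδ hab

theorem mgf_comparison_abs_general
    {Ω : Type*} [MeasurableSpace Ω] (μ : Measure Ω) [IsProbabilityMeasure μ]
    (Y Ystar : Ω → ℝ) (c s : ℝ)
    (hc : 0 < c)
    (hbd : ∀ᵐ ω ∂μ, |Ystar ω - Y ω| ≤ c)
    (hs0 : 0 ≤ s) (hs : s < 2 / c)
    (hint : Integrable (fun ω => Real.exp (s * Y ω)) μ) :
    ∫ ω, Real.exp (s * Ystar ω) ∂μ
      ≤ (1 + c * s / 2) / (1 - c * s / 2) * ∫ ω, Real.exp (s * Y ω) ∂μ := by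
  have hcs : c * s < 2 := by rwa [lt_div_iff₀ hc, mul_comm] at hs
  have hpt : ∀ᵐ ω ∂μ,
      exp (s * Ystar ω) ≤ (1 + c * s / 2) / (1 - c * s / 2) * exp (s * Y ω) := by
    filter_upwards [hbd] with ω hω
    refine exp_le_div_mul_exp (by positivity) hcs ?_
    nlinarith [le_abs_self (Ystar ω - Y ω)]
  calc ∫ ω, exp (s * Ystar ω) ∂μ
      ≤ ∫ ω, (1 + c * s / 2) / (1 - c * s / 2) * exp (s * Y ω) ∂μ :=
        integral_mono_of_nonneg (ae_of_all _ fun _ => (exp_pos _).le) (hint.const_mul _) hpt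
    _ = _ := integral_const_mul _ _

/-- mgf comparison under a two-sided bounded coupling. -/
theorem mgf_comparison_abs
    {Ω : Type*} [MeasurableSpace Ω] (μ : Measure Ω) [IsProbabilityMeasure μ]
    (Y Ystar : Ω → ℝ) (c s : ℝ)
    (hY : Measurable Y) (hYstar : Measurable Ystar) (hc : 0 < c)
    (hbd : ∀ᵐ ω ∂μ, |Ystar ω - Y ω| ≤ c)
    (hs0 : 0 ≤ s) (hs : s < 2 / c)
    (hint : Integrable (fun ω => Real.exp (s * Y ω)) μ) :
    ∫ ω, Real.exp (s * Ystar ω) ∂μ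
      ≤ (1 + c * s / 2) / (1 - c * s / 2) * ∫ ω, Real.exp (s * Y ω) ∂μ :=
  mgf_comparison_abs_general μ Y Ystar c s hc hbd hs0 hs hint
end
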